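/- arXiv:1002.3507 — 2 statements merged into one kernel-verified Lean document; each statement's English description precedes it below -/
import Mathlib

section
/- Let G be a locally compact, second countable, Hausdorff topological group, U a continuous unitary representation of G on a finite-dimensional complex Hilbert space H, and μ a Borel probability measure on G. Then the twirling superoperator S_μ is a random unitary map: there exist finitely many unitary operators V_1, …, V_m on H and a probability distribution p_1, …, p_m (p_k ≥ 0, Σ p_k = 1) such that S_μ(A) = Σ_{k=1}^m p_k V_k A V_k* for all A ∈ End(H); moreover, the unitaries V_k can be chosen in the closure of U(G) in the unitary group of H. -/
/-!
Write `Ad v` for the conjugation `A ↦ v A v*`. The twirl `S_μ = ∫ Ad (U g) dμ(g)` is the barycentre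
of a probability measure carried by `Ad '' K`, where `K` is the closure of `U(G)`; `K` is compact,
as a closed set of unitaries in finite dimension. The barycentre lies in the closed convex hull
of `Ad '' K`, and in finite dimension Carathéodory's theorem makes the convex hull of a compact set
compact, so `S_μ` is a finite convex combination of conjugations by elements of `K`.
-/

open MeasureTheory Module

section ConvexHull

variable {𝕜 E : Type*} [Field 𝕜] [LinearOrder 𝕜] [IsStrictOrderedRing 𝕜]
  [AddCommGroup E] [Module 𝕜 E] [FiniteDimensional 𝕜 E]

theorem exists_fin_of_mem_convexHull {s : Set E} {x : E} (hx : x ∈ convexHull 𝕜 s) :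
    ∃ k ≤ finrank 𝕜 E + 1, ∃ (w : Fin k → 𝕜) (z : Fin k → E),
      (∀ i, 0 ≤ w i) ∧ ∑ i, w i = 1 ∧ (∀ i, z i ∈ s) ∧ ∑ i, w i • z i = x := by
  obtain ⟨ι, _, z, w, hzs, hz_indep, hw_pos, hw_sum, hwz⟩ :=
    eq_pos_convex_span_of_mem_convexHull hx
  have hcard : Fintype.card ι ≤ finrank 𝕜 E + 1 :=
    hz_indep.card_le_finrank_succ.trans (Nat.add_le_add_right (Submodule.finrank_le _) 1)
  let e := (Fintype.equivFin ι).symm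
  refine ⟨_, hcard, w ∘ e, z ∘ e, fun _ => (hw_pos _).le, ?_, fun _ => hzs ⟨_, rfl⟩, ?_⟩
  · rw [← hw_sum]; exact e.sum_comp w
  · rw [← hwz]; exact e.sum_comp fun i => w i • z i

end ConvexHull

theorem IsCompact.integrable_of_ae_mem {α : Type*} [MeasurableSpace α] {μ : Measure α}
    [IsFiniteMeasure μ] {E : Type*} [NormedAddCommGroup E] {K : Set E} (hK : IsCompact K)
    {f : α → E} (hf : AEStronglyMeasurable f μ) (hfK : ∀ᵐ x ∂μ, f x ∈ K) : Integrable f μ := by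
  obtain ⟨C, hC⟩ := hK.isBounded.exists_norm_le
  exact Integrable.of_bound hf C (hfK.mono fun x hx => hC _ hx)

section TopologicalConvexHull

variable {E : Type*} [NormedAddCommGroup E] [NormedSpace ℝ E] [FiniteDimensional ℝ E]

/-- By Carathéodory, the convex hull is the union, over `k ≤ dim E + 1`, of the continuous
images of the compact sets `stdSimplex ℝ (Fin k) × sᵏ`. -/
theorem isCompact_convexHull {s : Set E} (hs : IsCompact s) : IsCompact (convexHull ℝ s) := by
  let combination (k : ℕ) (p : (Fin k → ℝ) × (Fin k → E)) : E := ∑ i, p.1 i • p.2 i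
  have hcont (k : ℕ) : Continuous (combination k) := by fun_prop
  have hhull : convexHull ℝ s = ⋃ k ∈ Finset.range (finrank ℝ E + 2),
      combination k '' (stdSimplex ℝ (Fin k) ×ˢ Set.univ.pi fun _ => s) := by
    refine subset_antisymm (fun x hx => ?_) (Set.iUnion₂_subset fun k _ => ?_)
    · obtain ⟨k, hk, w, z, hw_nonneg, hw_sum, hzs, rfl⟩ := exists_fin_of_mem_convexHull hx
      exact Set.mem_biUnion (Finset.mem_range.2 (Nat.lt_succ_of_le hk))
        ⟨(w, z), ⟨⟨hw_nonneg, hw_sum⟩, fun i _ => hzs i⟩, rfl⟩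
    · rintro _ ⟨⟨w, z⟩, ⟨⟨hw_nonneg, hw_sum⟩, hzs⟩, rfl⟩
      exact mem_convexHull_of_exists_fintype w z hw_nonneg hw_sum (fun i => hzs i trivial) rfl
  rw [hhull]
  exact Finset.isCompact_biUnion _ fun k _ =>
    ((isCompact_stdSimplex ℝ (Fin k)).prod (isCompact_univ_pi fun _ => hs)).image (hcont k)

theorem integral_mem_convexHull_of_isCompact {α : Type*} [MeasurableSpace α] {μ : Measure α}
    [IsProbabilityMeasure μ] {K : Set E} (hK : IsCompact K) {f : α → E}
    (hfi : Integrable f μ) (hfK : ∀ᵐ x ∂μ, f x ∈ K) : ∫ x, f x ∂μ ∈ convexHull ℝ K :=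
  haveI := FiniteDimensional.complete ℝ E
  (convex_convexHull ℝ K).integral_mem (isCompact_convexHull hK).isClosed
    (hfK.mono fun _ hx => subset_convexHull ℝ K hx) hfi

end TopologicalConvexHull

section Conjugation

variable (𝕜 : Type*) {A : Type*} [NontriviallyNormedField 𝕜] [NormedRing A] [NormedAlgebra 𝕜 A]
  [StarRing A]

noncomputable def conjCLM (v : A) : A →L[𝕜] A :=
  ContinuousLinearMap.mulLeftRight 𝕜 A v (star v)

@[simp]
theorem conjCLM_apply (v a : A) : conjCLM 𝕜 v a = v * a * star v :=
  rfl

theorem continuous_conjCLM [ContinuousStar A] : Continuous (conjCLM 𝕜 (A := A)) :=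
  (ContinuousLinearMap.mulLeftRight 𝕜 A).continuous.clm_apply continuous_star

end Conjugation

section Unitary

variable {A : Type*} [NormedRing A] [StarRing A] [CStarRing A]

theorem norm_le_one_of_mem_unitary {u : A} (hu : u ∈ unitary A) : ‖u‖ ≤ 1 := by
  nontriviality A
  exact (CStarRing.norm_of_mem_unitary hu).le

theorem isCompact_unitary [ProperSpace A] : IsCompact (unitary A : Set A) :=
  Metric.isCompact_of_isClosed_isBounded isClosed_unitary
    ((Metric.isBounded_iff_subset_closedBall 0).2
      ⟨1, fun _ hu => mem_closedBall_zero_iff.2 (norm_le_one_of_mem_unitary hu)⟩)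

end Unitary

theorem twirling_is_random_unitary_general
    {G : Type*} [TopologicalSpace G]
    [MeasurableSpace G] [BorelSpace G]
    {H : Type*} [NormedAddCommGroup H] [InnerProductSpace ℂ H]
    [FiniteDimensional ℂ H]
    (U : G → H →L[ℂ] H)
    (hU_unitary : ∀ g, U g ∈ unitary (H →L[ℂ] H))
    (hU_cont : Continuous U)
    (μ : Measure G) [IsProbabilityMeasure μ] :
    ∃ (m : ℕ) (V : Fin m → (H →L[ℂ] H)) (p : Fin m → ℝ),
      (∀ k, V k ∈ unitary (H →L[ℂ] H)) ∧
      (∀ k, V k ∈ closure (Set.range U)) ∧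
      (∀ k, 0 ≤ p k) ∧ (∑ k, p k = 1) ∧
      ∀ A : H →L[ℂ] H,
        (∫ g, U g * A * star (U g) ∂μ) = ∑ k, p k • (V k * A * star (V k)) := by
  set K := closure (Set.range U)
  have hK_unitary : K ⊆ unitary (H →L[ℂ] H) :=
    closure_minimal (Set.range_subset_iff.2 hU_unitary) isClosed_unitary
  have hK : IsCompact (conjCLM ℂ '' K) :=
    (isCompact_unitary.of_isClosed_subset isClosed_closure hK_unitary).image (continuous_conjCLM ℂ)
  have hUK : ∀ᵐ g ∂μ, conjCLM ℂ (U g) ∈ conjCLM ℂ '' K :=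
    ae_of_all _ fun g => ⟨U g, subset_closure ⟨g, rfl⟩, rfl⟩
  have hint : Integrable (fun g => conjCLM ℂ (U g)) μ :=
    hK.integrable_of_ae_mem ((continuous_conjCLM ℂ).comp hU_cont).aestronglyMeasurable hUK
  obtain ⟨m, -, p, S, hp_nonneg, hp_sum, hSK, hS⟩ :=
    exists_fin_of_mem_convexHull (integral_mem_convexHull_of_isCompact hK hint hUK)
  choose V hVK hVS using hSK
  refine ⟨m, V, p, fun k => hK_unitary (hVK k), hVK, hp_nonneg, hp_sum, fun A => ?_⟩
  calc ∫ g, U g * A * star (U g) ∂μ = (∫ g, conjCLM ℂ (U g) ∂μ) A :=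
        (ContinuousLinearMap.integral_apply hint A).symm
    _ = ∑ k, p k • (V k * A * star (V k)) := by simp [← hS, ← hVS]

/-- Every twirling superoperator `S_μ` on a finite-dimensional space is a
random unitary map, with the unitaries in the closure of `U(G)`. -/
theorem twirling_is_random_unitary
    {G : Type*} [Group G] [TopologicalSpace G] [IsTopologicalGroup G]
    [LocallyCompactSpace G] [SecondCountableTopology G] [T2Space G]
    [MeasurableSpace G] [BorelSpace G]
    {H : Type*} [NormedAddCommGroup H] [InnerProductSpace ℂ H]
    [FiniteDimensional ℂ H]
    (U : G → H →L[ℂ] H)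
    (hU_one : U 1 = 1)
    (hU_mul : ∀ g h : G, U (g * h) = U g * U h)
    (hU_unitary : ∀ g, U g ∈ unitary (H →L[ℂ] H))
    (hU_cont : Continuous U)
    (μ : Measure G) [IsProbabilityMeasure μ] :
    ∃ (m : ℕ) (V : Fin m → (H →L[ℂ] H)) (p : Fin m → ℝ),
      (∀ k, V k ∈ unitary (H →L[ℂ] H)) ∧
      (∀ k, V k ∈ closure (Set.range U)) ∧
      (∀ k, 0 ≤ p k) ∧ (∑ k, p k = 1) ∧
      ∀ A : H →L[ℂ] H,
        (∫ g, U g * A * star (U g) ∂μ) = ∑ k, p k • (V k * A * star (V k)) :=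
  twirling_is_random_unitary_general U hU_unitary hU_cont μ
end

section
/- Let G be a locally compact, second countable, Hausdorff topological group, let (μ_t)_{t≥0} be a continuous convolution semigroup of probability measures on G, and let φ : G → ℂ be a bounded Borel function which vanishes on some Borel neighborhood of the identity of G. Then for every sequence (τ_m) of strictly positive reals converging to zero, there exists a subsequence (t_k) = (τ_{m_k}) such that the limit lim_{k→∞} (1/t_k) ∫_G φ(g) dμ_{t_k}(g) exists in ℂ. -/
/-!
The point is the estimate `μ_t(Nᶜ) = O(t)` as `t ↓ 0`: with it, `t⁻¹ ∫ φ dμ_t` is bounded along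
`τ`, and Bolzano–Weierstrass in `ℂ` gives the subsequence.

For the estimate, pick an open `B ∋ 1` with `(B B⁻¹)⁻¹ (B B⁻¹) ⊆ N`; by weak continuity
`μ_s(B) ≥ 3/4` for `s ∈ (0, t₀]`. Run the random walk with steps distributed by `μ_t` for
`n ≈ t₀ / 2t` steps. It stays in `V = B B⁻¹` with probability at most `μ_t(N)^n`, and once it has
left `V` the rest of the walk leaves it outside `B` with probability at least `3/4`. As
`μ_{(n+1)t}(Bᶜ) ≤ 1/4`, this forces `μ_t(N)^n ≥ 2/3`, hence `n μ_t(Nᶜ) ≤ 1/2` by Bernoulli.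
-/

open MeasureTheory Filter Topology
open scoped Pointwise ENNReal BoundedContinuousFunction

theorem IsTopologicalGroup.completelyRegularSpace (G : Type*) [Group G] [TopologicalSpace G]
    [IsTopologicalGroup G] : CompletelyRegularSpace G := by
  let := IsTopologicalGroup.rightUniformSpace G
  infer_instance

theorem exists_boundedContinuousFunction_apply_eq_one_le_indicator {X : Type*}
    [TopologicalSpace X] [CompletelyRegularSpace X] {U : Set X} (hU : IsOpen U) {x : X}
    (hx : x ∈ U) : ∃ f : X →ᵇ ℝ, f x = 1 ∧ ∀ y, f y ≤ U.indicator 1 y := by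
  obtain ⟨g, hg, hgx, hgU⟩ := completelyRegularSpace_iff_isOpen.mp ‹_› x U hU hx
  let oneSub : C(unitInterval, ℝ) := ⟨fun s => 1 - (s : ℝ), by fun_prop⟩
  refine ⟨(BoundedContinuousFunction.mkOfCompact oneSub).compContinuous ⟨g, hg⟩,
    by simp [oneSub, hgx], fun y => ?_⟩
  by_cases hy : y ∈ U
  · simp [oneSub, hy, unitInterval.nonneg]
  · simp [oneSub, hy, hgU hy]

theorem eventually_le_measureReal_of_tendsto_integral {X ι : Type*} [TopologicalSpace X]
    [CompletelyRegularSpace X] [MeasurableSpace X] [OpensMeasurableSpace X] {l : Filter ι}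
    {ρ : ι → Measure X} {x : X} (hfin : ∀ᶠ i in l, IsFiniteMeasure (ρ i))
    (hρ : ∀ f : X →ᵇ ℝ, Tendsto (fun i => ∫ y, f y ∂ρ i) l (𝓝 (f x)))
    {U : Set X} (hU : IsOpen U) (hx : x ∈ U) {c : ℝ} (hc : c < 1) :
    ∀ᶠ i in l, c ≤ (ρ i).real U := by
  obtain ⟨f, hfx, hfU⟩ := exists_boundedContinuousFunction_apply_eq_one_le_indicator hU hx
  filter_upwards [hfin, (hρ f).eventually (eventually_ge_nhds (hfx ▸ hc))] with i _ hci
  calc c ≤ ∫ y, f y ∂ρ i := hci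
    _ ≤ ∫ y, U.indicator 1 y ∂ρ i :=
      integral_mono (f.integrable _) ((integrable_const 1).indicator hU.measurableSet) hfU
    _ = (ρ i).real U := integral_indicator_one hU.measurableSet

theorem norm_integral_le_mul_measureReal_compl {X E : Type*} [MeasurableSpace X]
    [NormedAddCommGroup E] [NormedSpace ℝ E] {ρ : Measure X} [IsFiniteMeasure ρ] {f : X → E}
    {C : ℝ} (hC : ∀ x, ‖f x‖ ≤ C) {N : Set X} (hN : ∀ x ∈ N, f x = 0) :
    ‖∫ x, f x ∂ρ‖ ≤ C * ρ.real Nᶜ := by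
  rw [← setIntegral_eq_integral_of_forall_compl_eq_zero fun x hx => hN x (not_not.mp hx)]
  exact norm_setIntegral_le_of_norm_le_const (measure_lt_top _ _) fun x _ => hC x

theorem one_sub_pow_mul_one_add_nat_mul_le_one {q : ℝ} (hq₀ : 0 ≤ q) (hq₁ : q ≤ 1) (n : ℕ) :
    (1 - q) ^ n * (1 + n * q) ≤ 1 :=
  calc (1 - q) ^ n * (1 + n * q) ≤ (1 - q) ^ n * (1 + q) ^ n := by
        gcongr
        exact one_add_mul_le_pow (by linarith) n
    _ = (1 - q ^ 2) ^ n := by rw [← mul_pow]; ring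
    _ ≤ 1 := pow_le_one₀ (by nlinarith) (by nlinarith)

theorem exists_isOpen_one_mem_mul_inv_mul_subset {G : Type*} [Group G] [TopologicalSpace G]
    [IsTopologicalGroup G] {N : Set G} (hN : N ∈ 𝓝 1) :
    ∃ B : Set G, IsOpen B ∧ 1 ∈ B ∧ (B * B⁻¹)⁻¹ * (B * B⁻¹) ⊆ N := by
  obtain ⟨W₁, hW₁, h1W₁, hW₁N⟩ := exists_open_nhds_one_mul_subset hN
  obtain ⟨W₂, hW₂, h1W₂, hW₂W₁⟩ := exists_open_nhds_one_mul_subset (hW₁.mem_nhds h1W₁)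
  refine ⟨W₂ ∩ W₂⁻¹, hW₂.inter hW₂.inv, ⟨h1W₂, by simpa using h1W₂⟩, ?_⟩
  have hsub : (W₂ ∩ W₂⁻¹) * (W₂ ∩ W₂⁻¹)⁻¹ ⊆ W₂ * W₂ :=
    Set.mul_subset_mul Set.inter_subset_left (by
      rw [Set.inter_inv, inv_inv]; exact Set.inter_subset_right)
  rw [mul_inv_rev, inv_inv]
  calc _ ⊆ (W₂ * W₂) * (W₂ * W₂) := Set.mul_subset_mul hsub hsub
    _ ⊆ W₁ * W₁ := Set.mul_subset_mul hW₂W₁ hW₂W₁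
    _ ⊆ N := hW₁N

theorem MeasureTheory.Measure.mconv_apply {M : Type*} [Monoid M] [MeasurableSpace M]
    [MeasurableMul₂ M] (ν ρ : Measure M) [SFinite ρ] {S : Set M} (hS : MeasurableSet S) :
    (ν ∗ₘ ρ) S = ∫⁻ y, ρ ((y * ·) ⁻¹' S) ∂ν := by
  rw [← lintegral_indicator_one hS, Measure.lintegral_mconv (measurable_one.indicator hS)]
  refine lintegral_congr fun y => ?_
  rw [← lintegral_indicator_one (hS.preimage (measurable_const_mul y))]
  rfl

section StayProb

variable {G : Type*} [Group G] [MeasurableSpace G] {ν : Measure G} {V : Set G}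

/-- The probability that the random walk with steps distributed by `ν`, started at `x`, stays in
`V` at times `0, 1, …, n`. -/
noncomputable def stayProb (ν : Measure G) (V : Set G) : ℕ → G → ℝ≥0∞
  | 0 => V.indicator 1
  | n + 1 => V.indicator fun x => ∫⁻ y, stayProb ν V n (x * y) ∂ν

theorem stayProb_of_notMem (n : ℕ) {x : G} (hx : x ∉ V) : stayProb ν V n x = 0 := by
  cases n <;> simp [stayProb, hx]

theorem stayProb_zero_of_mem {x : G} (hx : x ∈ V) : stayProb ν V 0 x = 1 := by
  simp [stayProb, hx]

theorem stayProb_succ_of_mem (n : ℕ) {x : G} (hx : x ∈ V) :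
    stayProb ν V (n + 1) x = ∫⁻ y, stayProb ν V n (x * y) ∂ν := by
  simp [stayProb, hx]

theorem measurable_stayProb [MeasurableMul₂ G] [SFinite ν] (hV : MeasurableSet V) :
    ∀ n, Measurable (stayProb ν V n)
  | 0 => measurable_one.indicator hV
  | n + 1 => ((measurable_stayProb hV n).comp measurable_mul).lintegral_prod_right'.indicator hV

theorem stayProb_le_one [IsProbabilityMeasure ν] : ∀ n (x : G), stayProb ν V n x ≤ 1
  | 0, x => Set.indicator_le_self' (fun _ _ => zero_le_one) x
  | n + 1, x => by
    by_cases hx : x ∈ V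
    · rw [stayProb_succ_of_mem n hx]
      calc ∫⁻ y, stayProb ν V n (x * y) ∂ν ≤ ∫⁻ _, 1 ∂ν :=
            lintegral_mono fun y => stayProb_le_one n (x * y)
        _ = 1 := by simp
    · simp [stayProb_of_notMem _ hx]

theorem stayProb_le_pow [IsProbabilityMeasure ν] {N : Set G} (hVN : V⁻¹ * V ⊆ N) :
    ∀ n (x : G), stayProb ν V n x ≤ ν N ^ n
  | 0, x => by simpa using stayProb_le_one 0 x
  | n + 1, x => by
    by_cases hx : x ∈ V
    · rw [stayProb_succ_of_mem n hx, pow_succ]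
      calc ∫⁻ y, stayProb ν V n (x * y) ∂ν ≤ ∫⁻ y, N.indicator (fun _ => ν N ^ n) y ∂ν := by
            refine lintegral_mono fun y => ?_
            by_cases hxy : x * y ∈ V
            · have hy : y ∈ N := hVN ⟨x⁻¹, by simpa using hx, x * y, hxy, by group⟩
              rw [Set.indicator_of_mem hy]
              exact stayProb_le_pow hVN n (x * y)
            · simp [stayProb_of_notMem _ hxy]
        _ ≤ ν N ^ n * ν N := lintegral_indicator_const_le _ _
    · simp [stayProb_of_notMem _ hx]

/-- `ρ k` plays the law of the walk at time `k + 1`. A walk that is at some `z ∉ V` can only be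
in `B` later if the remaining increment lies outside `B`, because `B * B⁻¹ ⊆ V`. -/
theorem one_sub_stayProb_mul_le [MeasurableMul₂ G] [IsProbabilityMeasure ν] {ρ : ℕ → Measure G}
    [∀ k, SFinite (ρ k)] (hρ : ∀ k, ρ (k + 1) = ν ∗ₘ ρ k) {B : Set G} (hB : MeasurableSet B)
    (hV : MeasurableSet V) (hBV : B * B⁻¹ ⊆ V) {c : ℝ≥0∞} :
    ∀ n, (∀ k < n, c ≤ ρ k B) → ∀ x ∈ V,
      (1 - stayProb ν V n x) * c ≤ ρ n ((x * ·) ⁻¹' Bᶜ)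
  | 0, _, x, hx => by simp [stayProb_zero_of_mem hx]
  | n + 1, hc, x, hx => by
    have hstep : ∀ y, (1 - stayProb ν V n (x * y)) * c ≤ ρ n ((x * y * ·) ⁻¹' Bᶜ) := by
      intro y
      by_cases hxy : x * y ∈ V
      · exact one_sub_stayProb_mul_le hρ hB hV hBV n (fun k hk => hc k (by omega)) _ hxy
      · have hBsub : B ⊆ (x * y * ·) ⁻¹' Bᶜ := fun w hw hxyw =>
          hxy (hBV ⟨x * y * w, hxyw, w⁻¹, by simpa using hw, by group⟩)
        rw [stayProb_of_notMem n hxy, tsub_zero, one_mul]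
        exact (hc n n.lt_succ_self).trans (measure_mono hBsub)
    have hmeas : Measurable fun y => stayProb ν V n (x * y) :=
      (measurable_stayProb hV n).comp (measurable_const_mul x)
    calc (1 - stayProb ν V (n + 1) x) * c
        = (∫⁻ y, (1 - stayProb ν V n (x * y)) ∂ν) * c := by
          rw [stayProb_succ_of_mem n hx, lintegral_sub hmeas
            ((lintegral_mono fun y => stayProb_le_one n (x * y)).trans_lt (by simp)).ne
            (ae_of_all _ fun y => stayProb_le_one n (x * y))]
          simp
      _ = ∫⁻ y, (1 - stayProb ν V n (x * y)) * c ∂ν :=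
          (lintegral_mul_const _ (measurable_const.sub hmeas)).symm
      _ ≤ ∫⁻ y, ρ n ((x * y * ·) ⁻¹' Bᶜ) ∂ν := lintegral_mono hstep
      _ = ρ (n + 1) ((x * ·) ⁻¹' Bᶜ) := by
          rw [hρ, Measure.mconv_apply _ _ (hB.compl.preimage (measurable_const_mul x))]
          simp only [Set.preimage_preimage, mul_assoc]

end StayProb

section ConvolutionSemigroup

variable {G : Type*} [Group G] [TopologicalSpace G] [IsTopologicalGroup G]
  [SecondCountableTopology G] [MeasurableSpace G] [BorelSpace G] {μ : ℝ → Measure G}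

theorem nat_mul_measureReal_compl_le_half (hprob : ∀ t, 0 ≤ t → IsProbabilityMeasure (μ t))
    (hconv : ∀ s t : ℝ, 0 ≤ s → 0 ≤ t →
      μ (s + t) = (((μ s).prod (μ t)).map fun p => p.1 * p.2))
    {B N : Set G} (hB : IsOpen B) (h1B : (1 : G) ∈ B) (hBN : (B * B⁻¹)⁻¹ * (B * B⁻¹) ⊆ N)
    (hN : MeasurableSet N) {t₀ : ℝ} (hμB : ∀ s ∈ Set.Ioc 0 t₀, 3 / 4 ≤ (μ s).real B)
    {t : ℝ} (ht : 0 < t) {n : ℕ} (hn : (n + 1) * t ≤ t₀) :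
    n * (μ t).real Nᶜ ≤ 1 / 2 := by
  have := hprob t ht.le
  let ρ : ℕ → Measure G := fun k => μ ((k + 1) * t)
  have hρprob (k : ℕ) : IsProbabilityMeasure (ρ k) := hprob _ (by positivity)
  have hρ (k : ℕ) : ρ (k + 1) = μ t ∗ₘ ρ k := by
    simp only [ρ, show ((k + 1 : ℕ) + 1 : ℝ) * t = t + (k + 1) * t by push_cast; ring]
    exact hconv _ _ ht.le (by positivity)
  have hρB : ∀ k < n, ENNReal.ofReal (3 / 4) ≤ ρ k B := fun k hk =>
    ENNReal.ofReal_le_of_le_toReal <| hμB _ ⟨by positivity, le_trans (by gcongr) hn⟩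
  have h1V : (1 : G) ∈ B * B⁻¹ := ⟨1, h1B, 1, by simpa using h1B, one_mul 1⟩
  have hexit := one_sub_stayProb_mul_le hρ hB.measurableSet (hB.mul_right).measurableSet
    subset_rfl n hρB 1 h1V
  have hstay := stayProb_le_pow (ν := μ t) hBN n 1
  set p := (μ t).real N
  have hp : 2 / 3 ≤ p ^ n := by
    have hρn : (ρ n).real Bᶜ ≤ 1 / 4 := by
      rw [probReal_compl_eq_one_sub hB.measurableSet]
      linarith [hμB ((n + 1) * t) ⟨by positivity, hn⟩]
    have hexit_real : (1 - p ^ n) * (3 / 4) ≤ (ρ n).real Bᶜ := by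
      have hexit' : (1 - μ t N ^ n) * ENNReal.ofReal (3 / 4) ≤ ρ n Bᶜ := by
        simpa using (mul_le_mul_left (tsub_le_tsub_left hstay 1) _).trans hexit
      rw [← ofReal_measureReal (measure_ne_top _ _), ← ENNReal.ofReal_one,
        ← ENNReal.ofReal_pow measureReal_nonneg, ← ENNReal.ofReal_sub _ (by positivity),
        ← ENNReal.ofReal_mul (sub_nonneg.mpr (pow_le_one₀ measureReal_nonneg measureReal_le_one))]
        at hexit'
      exact (ENNReal.ofReal_le_iff_le_toReal (measure_ne_top _ _)).mp hexit'
    linarith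
  have hq := one_sub_pow_mul_one_add_nat_mul_le_one (q := (μ t).real Nᶜ) measureReal_nonneg
    measureReal_le_one n
  rw [probReal_compl_eq_one_sub hN, sub_sub_cancel] at hq
  rw [probReal_compl_eq_one_sub hN]
  nlinarith [pow_nonneg (measureReal_nonneg (μ := μ t) (s := N)) n]

theorem exists_measureReal_compl_le_mul (hprob : ∀ t, 0 ≤ t → IsProbabilityMeasure (μ t))
    (hconv : ∀ s t : ℝ, 0 ≤ s → 0 ≤ t →
      μ (s + t) = (((μ s).prod (μ t)).map fun p => p.1 * p.2))
    (hweak : ∀ f : G →ᵇ ℝ, Tendsto (fun t => ∫ g, f g ∂(μ t)) (𝓝[>] 0) (𝓝 (f 1)))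
    {N : Set G} (hN : N ∈ 𝓝 1) (hNm : MeasurableSet N) :
    ∃ C δ : ℝ, 0 < δ ∧ ∀ t ∈ Set.Ioc 0 δ, (μ t).real Nᶜ ≤ C * t := by
  have := IsTopologicalGroup.completelyRegularSpace G
  obtain ⟨B, hB, h1B, hBN⟩ := exists_isOpen_one_mem_mul_inv_mul_subset hN
  have hfin : ∀ᶠ s in 𝓝[>] (0 : ℝ), IsFiniteMeasure (μ s) :=
    eventually_nhdsWithin_of_forall fun s hs => by have := hprob s (le_of_lt hs); infer_instance
  obtain ⟨t₀, ht₀ : 0 < t₀, hμB⟩ := mem_nhdsGT_iff_exists_Ioc_subset.mp <|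
    eventually_le_measureReal_of_tendsto_integral hfin hweak hB h1B (by norm_num : (3 / 4 : ℝ) < 1)
  refine ⟨3 / t₀, t₀ / 2, half_pos ht₀, fun t ⟨ht, htδ⟩ => ?_⟩
  set n := ⌊t₀ / (2 * t)⌋₊
  have hn_le : (n : ℝ) * t ≤ t₀ / 2 := by
    calc (n : ℝ) * t ≤ t₀ / (2 * t) * t := by gcongr; exact Nat.floor_le (by positivity)
      _ = t₀ / 2 := by field_simp
  have hn_gt : t₀ < 2 * t * (n + 1) := by
    have := Nat.lt_floor_add_one (t₀ / (2 * t))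
    rw [div_lt_iff₀ (by positivity)] at this
    linarith
  have hnq := nat_mul_measureReal_compl_le_half hprob hconv hB h1B hBN hNm hμB ht
    (n := n) (by linarith)
  have hq : (μ t).real Nᶜ ≤ 1 := by have := hprob t ht.le; exact measureReal_le_one
  rw [div_mul_eq_mul_div, le_div_iff₀ ht₀]
  nlinarith [measureReal_nonneg (μ := μ t) (s := Nᶜ)]

end ConvolutionSemigroup

theorem subsequence_limit_of_vanishing_near_identity_general
    {G : Type*} [Group G] [TopologicalSpace G] [IsTopologicalGroup G]
    [SecondCountableTopology G]
    [MeasurableSpace G] [BorelSpace G]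
    (μ : ℝ → Measure G)
    (hprob : ∀ t, 0 ≤ t → IsProbabilityMeasure (μ t))
    (hconv : ∀ s t : ℝ, 0 ≤ s → 0 ≤ t →
      μ (s + t) = (((μ s).prod (μ t)).map fun p => p.1 * p.2))
    (hweak : ∀ f : BoundedContinuousFunction G ℝ,
      Tendsto (fun t => ∫ g, f g ∂(μ t)) (𝓝[>] (0 : ℝ)) (𝓝 (f 1)))
    (φ : G → ℂ) (hφ_bdd : ∃ C : ℝ, ∀ g, ‖φ g‖ ≤ C)
    (hφ_vanish : ∃ N : Set G, MeasurableSet N ∧ N ∈ 𝓝 (1 : G) ∧ ∀ g ∈ N, φ g = 0)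
    (τ : ℕ → ℝ) (hτ_pos : ∀ m, 0 < τ m) (hτ_lim : Tendsto τ atTop (𝓝 0)) :
    ∃ mk : ℕ → ℕ, StrictMono mk ∧ ∃ c : ℂ,
      Tendsto (fun k => (τ (mk k))⁻¹ • ∫ g, φ g ∂(μ (τ (mk k)))) atTop (𝓝 c) := by
  obtain ⟨C, hC⟩ := hφ_bdd
  obtain ⟨N, hNm, hN, hφN⟩ := hφ_vanish
  obtain ⟨K, δ, hδ, hK⟩ := exists_measureReal_compl_le_mul hprob hconv hweak hN hNm
  have hbound : ∀ t ∈ Set.Ioc 0 δ, ‖t⁻¹ • ∫ g, φ g ∂(μ t)‖ ≤ C * K := fun t ht => by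
    have := hprob t ht.1.le
    rw [norm_smul, norm_inv, Real.norm_of_nonneg ht.1.le, inv_mul_le_iff₀ ht.1]
    calc ‖∫ g, φ g ∂(μ t)‖ ≤ C * (μ t).real Nᶜ := norm_integral_le_mul_measureReal_compl hC hφN
      _ ≤ C * (K * t) := by gcongr; exacts [(norm_nonneg _).trans (hC 1), hK t ht]
      _ = t * (C * K) := by ring
  have hτδ : ∀ᶠ m in atTop, τ m ∈ Set.Ioc 0 δ :=
    (hτ_lim.eventually (eventually_le_nhds hδ)).mono fun m hm => ⟨hτ_pos m, hm⟩
  obtain ⟨c, -, mk, hmk, hlim⟩ := tendsto_subseq_of_frequently_bounded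
    (Metric.isBounded_closedBall (x := 0) (r := C * K))
    (hτδ.mono fun m hm => mem_closedBall_zero_iff.mpr (hbound _ hm)).frequently
  exact ⟨mk, hmk, c, hlim⟩

/-- For a continuous convolution semigroup of probability measures
`(μ_t)_{t≥0}` on a l.c.s.c. group `G` and a bounded Borel function `φ : G → ℂ` vanishing on a
Borel neighborhood of the identity, every sequence of strictly positive reals converging to `0`
has a subsequence `(t_k)` along which `(1/t_k) ∫ φ dμ_{t_k}` converges in `ℂ`. -/
theorem subsequence_limit_of_vanishing_near_identity
    {G : Type*} [Group G] [TopologicalSpace G] [IsTopologicalGroup G]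
    [LocallyCompactSpace G] [SecondCountableTopology G] [T2Space G]
    [MeasurableSpace G] [BorelSpace G]
    (μ : ℝ → Measure G)
    (hprob : ∀ t, 0 ≤ t → IsProbabilityMeasure (μ t))
    (h0 : μ 0 = Measure.dirac 1)
    (hconv : ∀ s t : ℝ, 0 ≤ s → 0 ≤ t →
      μ (s + t) = (((μ s).prod (μ t)).map fun p => p.1 * p.2))
    (hweak : ∀ f : BoundedContinuousFunction G ℝ,
      Tendsto (fun t => ∫ g, f g ∂(μ t)) (𝓝[>] (0 : ℝ)) (𝓝 (f 1)))
    (φ : G → ℂ) (hφ_meas : Measurable φ) (hφ_bdd : ∃ C : ℝ, ∀ g, ‖φ g‖ ≤ C)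
    (hφ_vanish : ∃ N : Set G, MeasurableSet N ∧ N ∈ 𝓝 (1 : G) ∧ ∀ g ∈ N, φ g = 0)
    (τ : ℕ → ℝ) (hτ_pos : ∀ m, 0 < τ m) (hτ_lim : Tendsto τ atTop (𝓝 0)) :
    ∃ mk : ℕ → ℕ, StrictMono mk ∧ ∃ c : ℂ,
      Tendsto (fun k => (τ (mk k))⁻¹ • ∫ g, φ g ∂(μ (τ (mk k)))) atTop (𝓝 c) :=
  subsequence_limit_of_vanishing_near_identity_general μ hprob hconv hweak φ hφ_bdd hφ_vanish τ
    hτ_pos hτ_lim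
end
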